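/- Let (Ω, μ) be a finite measure space and p ∈ (0,1). Let (ε_k) be a sequence of positive reals with ε_k → 0, and let (w_k), (v_k) be sequences in L²(Ω, μ) with w_k → w and v_k → w in L²(Ω, μ). Assume furthermore that ∫_Ω ψ_{ε_k}'(w_k(x)²)·(v_k(x) − w_k(x))² dμ(x) → 0. Then ∫_Ω 2 ψ_{ε_k}'(w_k(x)²) · v_k(x)² dμ(x) → p ∫_Ω |w(x)|^p dμ(x). -/

import Mathlib

open MeasureTheory Filter Topology

/-- The derivative `ψ_ε'` of the smoothed `p/2`-power function (for `ε > 0`). -/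
noncomputable def psiD (p ε t : ℝ) : ℝ :=
  if t = 0 then (p / 2) * ε ^ (p - 2)
  else (p / 2) * min (ε ^ (p - 2)) (t ^ ((p - 2) / 2))

/-!
Pointwise `p|b|^p - pε^p ≤ 2ψ_ε'(b²)b² ≤ p|b|^p`, so `∫ 2ψ_{ε_k}'(w_k²) w_k²` has the limit of
`p ∫ |w_k|^p`, which is `p ∫ |w|^p` because `f ↦ ∫ |f|^p` is continuous on `L²` of a finite
measure when `p ≤ 1` (use `||a|^p - |b|^p| ≤ |a - b|^p ≤ δ^p + δ^(p-2) (a - b)²`). Replacing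
`w_k²` by `v_k²` changes the integral by at most
`δ ∫ 2ψ_{ε_k}'(w_k²) w_k² + (2 + 2/δ) ∫ ψ_{ε_k}'(w_k²)(v_k - w_k)²` for every `δ > 0`, and the
last integral tends to `0` by hypothesis.
-/

lemma abs_rpow_eq_abs_rpow_sub_two_mul_sq {a : ℝ} (ha : a ≠ 0) (p : ℝ) :
    |a| ^ p = |a| ^ (p - 2) * a ^ 2 := by
  rw [← sq_abs, ← Real.rpow_natCast, ← Real.rpow_add (abs_pos.mpr ha)]
  norm_num

lemma abs_rpow_le_rpow_add_rpow_mul_sq {p δ : ℝ} (hp0 : 0 ≤ p) (hp2 : p ≤ 2) (hδ : 0 < δ)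
    (a : ℝ) : |a| ^ p ≤ δ ^ p + δ ^ (p - 2) * a ^ 2 := by
  rcases le_or_gt |a| δ with ha | ha
  · have : 0 ≤ δ ^ (p - 2) * a ^ 2 := by positivity
    linarith [Real.rpow_le_rpow (abs_nonneg a) ha hp0]
  · have ha0 : a ≠ 0 := abs_pos.mp (hδ.trans ha)
    have : |a| ^ (p - 2) ≤ δ ^ (p - 2) := Real.rpow_le_rpow_of_nonpos hδ ha.le (by linarith)
    rw [abs_rpow_eq_abs_rpow_sub_two_mul_sq ha0]
    nlinarith [Real.rpow_nonneg hδ.le p, sq_nonneg a]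

lemma abs_abs_rpow_sub_abs_rpow_le {p : ℝ} (hp0 : 0 ≤ p) (hp1 : p ≤ 1) (a b : ℝ) :
    |(|a| ^ p - |b| ^ p)| ≤ |a - b| ^ p := by
  have key : ∀ u v : ℝ, |u| ^ p ≤ |u - v| ^ p + |v| ^ p := fun u v =>
    calc |u| ^ p ≤ (|u - v| + |v|) ^ p := by
          gcongr
          simpa using abs_add_le (u - v) v
      _ ≤ |u - v| ^ p + |v| ^ p :=
          Real.rpow_add_le_add_rpow (abs_nonneg _) (abs_nonneg _) hp0 hp1
  rw [abs_sub_le_iff]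
  constructor
  · linarith [key a b]
  · have := key b a
    rw [abs_sub_comm] at this
    linarith

-- Young: `2|b(a - b)| ≤ δb² + (a - b)²/δ`, and `a² - b² = 2b(a - b) + (a - b)²`.
lemma abs_sq_sub_sq_le {δ : ℝ} (hδ : 0 < δ) (a b : ℝ) :
    |a ^ 2 - b ^ 2| ≤ δ * b ^ 2 + (1 + 1 / δ) * (a - b) ^ 2 := by
  have hδc : δ * (1 / δ) = 1 := by field_simp
  rw [abs_le]
  constructor
  · nlinarith [sq_nonneg (δ * b + (a - b)), sq_nonneg (a - b), mul_pos hδ hδ]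
  · nlinarith [sq_nonneg (δ * b - (a - b)), sq_nonneg (a - b), mul_pos hδ hδ]

lemma tendsto_zero_of_forall_abs_le {ι : Type*} {l : Filter ι} {f a c : ι → ℝ} {α : ℝ}
    (ha : Tendsto a l (𝓝 α)) (hc : Tendsto c l (𝓝 0))
    (h : ∀ δ > 0, ∃ K, ∀ i, |f i| ≤ δ * a i + K * c i) : Tendsto f l (𝓝 0) := by
  rw [Metric.tendsto_nhds]
  intro η hη
  set M := |α| + 1
  have hM : 0 < M := by positivity
  obtain ⟨K, hK⟩ := h (η / (2 * M)) (by positivity)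
  have ha' : ∀ᶠ i in l, a i < M :=
    ha.eventually (gt_mem_nhds ((le_abs_self α).trans_lt (lt_add_one _)))
  have hc' : ∀ᶠ i in l, K * c i < η / 2 :=
    (hc.const_mul K).eventually (gt_mem_nhds (by simpa using half_pos hη))
  filter_upwards [ha', hc'] with i hai hci
  rw [Real.dist_0_eq_abs]
  calc |f i| ≤ η / (2 * M) * a i + K * c i := hK i
    _ < η / (2 * M) * M + η / 2 := by gcongr
    _ = η := by field_simp; ring

section psiD

variable {p ε : ℝ}

lemma measurable_psiD (p ε : ℝ) : Measurable (psiD p ε) := by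
  apply measurable_of_continuousOn_compl_singleton 0
  refine (continuousOn_const.mul (continuousOn_const.inf
    (continuousOn_id.rpow_const fun x hx => Or.inl hx))).congr fun t ht => if_neg ht

lemma psiD_nonneg (hp : 0 ≤ p) (hε : 0 ≤ ε) {t : ℝ} (ht : 0 ≤ t) : 0 ≤ psiD p ε t := by
  unfold psiD
  split <;> positivity

lemma psiD_le (hp : 0 ≤ p) (t : ℝ) : psiD p ε t ≤ p / 2 * ε ^ (p - 2) := by
  unfold psiD
  split
  · exact le_rfl
  · exact mul_le_mul_of_nonneg_left (min_le_left _ _) (by linarith)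

lemma two_mul_psiD_sq_mul_sq {b : ℝ} (hb : b ≠ 0) :
    2 * psiD p ε (b ^ 2) * b ^ 2 = p * min (ε ^ (p - 2) * b ^ 2) (|b| ^ p) := by
  have hsq : (b ^ 2) ^ ((p - 2) / 2) = |b| ^ (p - 2) := by
    rw [← sq_abs, ← Real.rpow_natCast, ← Real.rpow_mul (abs_nonneg b)]
    ring_nf
  rw [psiD, if_neg (pow_ne_zero 2 hb), hsq, abs_rpow_eq_abs_rpow_sub_two_mul_sq hb p,
    ← min_mul_of_nonneg _ _ (sq_nonneg b)]
  ring

lemma abs_two_mul_psiD_sq_mul_sq_sub_le (hp0 : 0 < p) (hp2 : p ≤ 2) (hε : 0 < ε) (b : ℝ) :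
    |2 * psiD p ε (b ^ 2) * b ^ 2 - p * |b| ^ p| ≤ p * ε ^ p := by
  rcases eq_or_ne b 0 with rfl | hb
  · simp only [ne_eq, OfNat.ofNat_ne_zero, not_false_eq_true, zero_pow, mul_zero, abs_zero,
      Real.zero_rpow hp0.ne', sub_self]
    positivity
  rw [two_mul_psiD_sq_mul_sq hb, ← mul_sub, abs_mul, abs_of_pos hp0, abs_sub_comm,
    abs_of_nonneg (sub_nonneg.mpr (min_le_right _ _))]
  gcongr
  have := abs_rpow_le_rpow_add_rpow_mul_sq hp0.le hp2 hε b
  have : 0 ≤ ε ^ p := Real.rpow_nonneg hε.le p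
  have : |b| ^ p - ε ^ p ≤ min (ε ^ (p - 2) * b ^ 2) (|b| ^ p) := le_min (by linarith) (by linarith)
  linarith

end psiD

section Integral

variable {Ω : Type*} [MeasurableSpace Ω] {μ : Measure Ω} {p ε : ℝ} {f g : Ω → ℝ}

lemma MeasureTheory.MemLp.integrable_abs_rpow [IsFiniteMeasure μ] (hf : MemLp f 2 μ) (hp0 : 0 ≤ p)
    (hp2 : p ≤ 2) : Integrable (fun x => |f x| ^ p) μ := by
  have := (hf.mono_exponent (p := ENNReal.ofReal p) (by simpa using hp2)).integrable_norm_rpow'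
  simpa [ENNReal.toReal_ofReal hp0] using this

lemma integrable_psiD_sq_mul (hp : 0 ≤ p) (hε : 0 ≤ ε) (hf : AEStronglyMeasurable f μ)
    (hg : Integrable g μ) : Integrable (fun x => psiD p ε (f x ^ 2) * g x) μ :=
  hg.bdd_mul
    ((measurable_psiD p ε).comp_aemeasurable (hf.aemeasurable.pow_const 2)).aestronglyMeasurable
    (Eventually.of_forall fun x => by
      rw [Real.norm_of_nonneg (psiD_nonneg hp hε (sq_nonneg _))]
      exact psiD_le hp _)

lemma integrable_two_mul_psiD_sq_mul_sq (hp : 0 ≤ p) (hε : 0 ≤ ε) (hf : AEStronglyMeasurable f μ)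
    (hg : MemLp g 2 μ) : Integrable (fun x => 2 * psiD p ε (f x ^ 2) * g x ^ 2) μ := by
  simpa only [mul_assoc] using (integrable_psiD_sq_mul hp hε hf hg.integrable_sq).const_mul 2

lemma abs_integral_two_mul_psiD_sq_mul_sq_sub_le [IsFiniteMeasure μ] (hp0 : 0 < p) (hp2 : p ≤ 2)
    (hε : 0 < ε) (hf : MemLp f 2 μ) :
    |∫ x, 2 * psiD p ε (f x ^ 2) * f x ^ 2 ∂μ - p * ∫ x, |f x| ^ p ∂μ|
      ≤ p * ε ^ p * μ.real Set.univ := by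
  rw [← integral_const_mul, ← integral_sub
    (integrable_two_mul_psiD_sq_mul_sq hp0.le hε.le hf.1 hf)
    ((hf.integrable_abs_rpow hp0.le hp2).const_mul p), ← Real.norm_eq_abs]
  exact norm_integral_le_of_norm_le_const
    (Eventually.of_forall fun x => abs_two_mul_psiD_sq_mul_sq_sub_le hp0 hp2 hε (f x))

lemma abs_integral_two_mul_psiD_sq_mul_sq_sub_sq_le {δ : ℝ} (hp : 0 ≤ p) (hε : 0 ≤ ε)
    (hδ : 0 < δ) (hf : MemLp f 2 μ) (hg : MemLp g 2 μ) :
    |∫ x, 2 * psiD p ε (f x ^ 2) * g x ^ 2 ∂μ - ∫ x, 2 * psiD p ε (f x ^ 2) * f x ^ 2 ∂μ|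
      ≤ δ * ∫ x, 2 * psiD p ε (f x ^ 2) * f x ^ 2 ∂μ
        + (2 + 2 / δ) * ∫ x, psiD p ε (f x ^ 2) * (g x - f x) ^ 2 ∂μ := by
  have hgf := integrable_two_mul_psiD_sq_mul_sq hp hε hf.1 hg
  have hff := integrable_two_mul_psiD_sq_mul_sq hp hε hf.1 hf
  have hdiff : Integrable (fun x => psiD p ε (f x ^ 2) * (g x - f x) ^ 2) μ :=
    integrable_psiD_sq_mul hp hε hf.1 (hg.sub hf).integrable_sq
  rw [← integral_sub hgf hff, ← integral_const_mul, ← integral_const_mul,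
    ← integral_add (hff.const_mul δ) (hdiff.const_mul _)]
  refine abs_integral_le_integral_abs.trans (integral_mono (hgf.sub hff).abs
    ((hff.const_mul δ).add (hdiff.const_mul _)) fun x => ?_)
  have hψ := psiD_nonneg hp hε (sq_nonneg (f x))
  calc |2 * psiD p ε (f x ^ 2) * g x ^ 2 - 2 * psiD p ε (f x ^ 2) * f x ^ 2|
      = 2 * psiD p ε (f x ^ 2) * |g x ^ 2 - f x ^ 2| := by
        rw [← mul_sub, abs_mul, abs_of_nonneg (by positivity)]
    _ ≤ 2 * psiD p ε (f x ^ 2) * (δ * f x ^ 2 + (1 + 1 / δ) * (g x - f x) ^ 2) := by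
        gcongr
        exact abs_sq_sub_sq_le hδ _ _
    _ = _ := by ring

lemma abs_integral_abs_rpow_sub_le [IsFiniteMeasure μ] {δ : ℝ} (hp0 : 0 ≤ p) (hp1 : p ≤ 1)
    (hδ : 0 < δ) (hf : MemLp f 2 μ) (hg : MemLp g 2 μ) :
    |∫ x, |f x| ^ p ∂μ - ∫ x, |g x| ^ p ∂μ|
      ≤ δ ^ p * μ.real Set.univ + δ ^ (p - 2) * ∫ x, (f x - g x) ^ 2 ∂μ := by
  have hfp := hf.integrable_abs_rpow hp0 (by linarith)
  have hgp := hg.integrable_abs_rpow hp0 (by linarith)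
  have hdiff : Integrable (fun x => δ ^ (p - 2) * (f x - g x) ^ 2) μ :=
    (hf.sub hg).integrable_sq.const_mul _
  calc |∫ x, |f x| ^ p ∂μ - ∫ x, |g x| ^ p ∂μ| = |∫ x, (|f x| ^ p - |g x| ^ p) ∂μ| := by
        rw [integral_sub hfp hgp]
    _ ≤ ∫ x, (δ ^ p + δ ^ (p - 2) * (f x - g x) ^ 2) ∂μ :=
        abs_integral_le_integral_abs.trans <| integral_mono (hfp.sub hgp).abs
          ((integrable_const _).add hdiff) fun x =>
            (abs_abs_rpow_sub_abs_rpow_le hp0 hp1 _ _).trans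
              (abs_rpow_le_rpow_add_rpow_mul_sq hp0 (by linarith) hδ (f x - g x))
    _ = δ ^ p * μ.real Set.univ + δ ^ (p - 2) * ∫ x, (f x - g x) ^ 2 ∂μ := by
        rw [integral_add (integrable_const _) hdiff, integral_const, integral_const_mul,
          smul_eq_mul, mul_comm]

end Integral

section L2

variable {Ω ι : Type*} [MeasurableSpace Ω] {μ : Measure Ω} {l : Filter ι}
  {F : ι → Lp ℝ 2 μ} {f : Lp ℝ 2 μ}

lemma integral_sq_eq_norm_sq (f : Lp ℝ 2 μ) : ∫ x, f x ^ 2 ∂μ = ‖f‖ ^ 2 := by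
  rw [← real_inner_self_eq_norm_sq, L2.inner_def]
  simp only [RCLike.inner_apply, starRingEnd_apply, star_trivial, sq]

lemma tendsto_integral_sub_sq (h : Tendsto F l (𝓝 f)) :
    Tendsto (fun i => ∫ x, (F i x - f x) ^ 2 ∂μ) l (𝓝 0) := by
  have hnorm : Tendsto (fun i => ‖F i - f‖ ^ 2) l (𝓝 0) := by
    simpa using (tendsto_iff_norm_sub_tendsto_zero.mp h).pow 2
  refine hnorm.congr fun i => ?_
  rw [← integral_sq_eq_norm_sq]
  refine integral_congr_ae ?_
  filter_upwards [Lp.coeFn_sub (F i) f] with x hx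
  rw [hx, Pi.sub_apply]

lemma tendsto_integral_abs_rpow [IsFiniteMeasure μ] {p : ℝ} (hp0 : 0 < p) (hp1 : p ≤ 1)
    (h : Tendsto F l (𝓝 f)) :
    Tendsto (fun i => ∫ x, |F i x| ^ p ∂μ) l (𝓝 (∫ x, |f x| ^ p ∂μ)) := by
  rw [← tendsto_sub_nhds_zero_iff]
  refine tendsto_zero_of_forall_abs_le (tendsto_const_nhds (x := μ.real Set.univ))
    (tendsto_integral_sub_sq h)
    fun η hη => ⟨(η ^ p⁻¹) ^ (p - 2), fun i => ?_⟩
  have := abs_integral_abs_rpow_sub_le hp0.le hp1 (Real.rpow_pos_of_pos hη p⁻¹)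
    (Lp.memLp (F i)) (Lp.memLp f)
  rwa [Real.rpow_inv_rpow hη.le hp0.ne'] at this

end L2

theorem integral_psiD_vk_sq_tendsto_general {Ω : Type*} [MeasurableSpace Ω] (μ : Measure Ω)
    [IsFiniteMeasure μ] (p : ℝ) (hp : p ∈ Set.Ioo (0 : ℝ) 1)
    (wk vk : ℕ → Lp ℝ 2 μ) (w : Lp ℝ 2 μ)
    (hwconv : Tendsto wk atTop (nhds w))
    (ε : ℕ → ℝ) (hε : ∀ k, 0 < ε k) (hεconv : Tendsto ε atTop (nhds 0))
    (hcross : Tendsto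
      (fun k => ∫ x, psiD p (ε k) ((wk k x) ^ 2) * (vk k x - wk k x) ^ 2 ∂μ)
      atTop (nhds 0)) :
    Tendsto (fun k => ∫ x, 2 * psiD p (ε k) ((wk k x) ^ 2) * (vk k x) ^ 2 ∂μ) atTop
      (nhds (p * ∫ x, |w x| ^ p ∂μ)) := by
  obtain ⟨hp0, hp1⟩ := hp
  have hεp : Tendsto (fun k => p * ε k ^ p * μ.real Set.univ) atTop (𝓝 0) := by
    have := (Real.continuousAt_rpow_const 0 p (Or.inr hp0.le)).tendsto.comp hεconv
    simpa [Real.zero_rpow hp0.ne'] using (this.const_mul p).mul_const (μ.real Set.univ)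
  have hA : Tendsto (fun k => ∫ x, 2 * psiD p (ε k) (wk k x ^ 2) * wk k x ^ 2 ∂μ) atTop
      (𝓝 (p * ∫ x, |w x| ^ p ∂μ)) :=
    tendsto_of_tendsto_of_dist ((tendsto_integral_abs_rpow hp0 hp1.le hwconv).const_mul p) <|
      squeeze_zero (fun _ => dist_nonneg) (fun k => by
        rw [dist_comm, Real.dist_eq]
        exact abs_integral_two_mul_psiD_sq_mul_sq_sub_le hp0 (by linarith) (hε k) (Lp.memLp _))
        hεp
  have hIA := tendsto_zero_of_forall_abs_le hA hcross fun δ hδ => ⟨2 + 2 / δ, fun k =>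
    abs_integral_two_mul_psiD_sq_mul_sq_sub_sq_le hp0.le (hε k).le hδ (Lp.memLp _) (Lp.memLp _)⟩
  simpa using hIA.add hA

/-- On a finite measure space, for `p ∈ (0,1)`: if `ε_k > 0` with `ε_k → 0`, `w_k → w` and
`v_k → w` in `L²(Ω,μ)`, and moreover `∫ ψ_{ε_k}'(w_k²)(v_k - w_k)² dμ → 0`, then
`∫ 2 ψ_{ε_k}'(w_k²) v_k² dμ → p ∫ |w|^p dμ`. -/
theorem integral_psiD_vk_sq_tendsto {Ω : Type*} [MeasurableSpace Ω] (μ : Measure Ω)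
    [IsFiniteMeasure μ] (p : ℝ) (hp : p ∈ Set.Ioo (0 : ℝ) 1)
    (wk vk : ℕ → Lp ℝ 2 μ) (w : Lp ℝ 2 μ)
    (hwconv : Tendsto wk atTop (nhds w)) (hvconv : Tendsto vk atTop (nhds w))
    (ε : ℕ → ℝ) (hε : ∀ k, 0 < ε k) (hεconv : Tendsto ε atTop (nhds 0))
    (hcross : Tendsto
      (fun k => ∫ x, psiD p (ε k) ((wk k x) ^ 2) * (vk k x - wk k x) ^ 2 ∂μ)
      atTop (nhds 0)) :
    Tendsto (fun k => ∫ x, 2 * psiD p (ε k) ((wk k x) ^ 2) * (vk k x) ^ 2 ∂μ) atTop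
      (nhds (p * ∫ x, |w x| ^ p ∂μ)) :=
  integral_psiD_vk_sq_tendsto_general μ p hp wk vk w hwconv ε hε hεconv hcross
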